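/- Suppose the feature vector decomposes as X = (X₀, X̃) where X₀ = g(S) is a deterministic function of S, and under the joint distribution P of (X₀, X̃, Y, S) the component X̃ is independent of S and also conditionally independent of S given Y. Then the ratio P(X = x | Y = y, S = s) / P(X = x | S = s) does not depend on s: for all x = (x₀, x̃), y, s for which the conditional probabilities are defined and P(X = x | S = s) > 0, the ratio equals P(X̃ = x̃ | Y = y) / P(X̃ = x̃), a function φ(x, y) of (x, y) alone. -/

import Mathlib

open Finset

noncomputable section

variable {𝒳₀ 𝒳t 𝒴 𝒮 : Type*} [Fintype 𝒳₀] [Fintype 𝒳t] [Fintype 𝒴] [Fintype 𝒮]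

/-- Marginal distribution of `X̃` under the joint `P` of `(X₀, X̃, Y, S)`. -/
def margXt (P : 𝒳₀ → 𝒳t → 𝒴 → 𝒮 → ℝ) (xt : 𝒳t) : ℝ := ∑ x₀, ∑ y, ∑ s, P x₀ xt y s

/-- Marginal distribution of `S`. -/
def margS (P : 𝒳₀ → 𝒳t → 𝒴 → 𝒮 → ℝ) (s : 𝒮) : ℝ := ∑ x₀, ∑ xt, ∑ y, P x₀ xt y s

/-- Marginal distribution of `Y`. -/
def margY (P : 𝒳₀ → 𝒳t → 𝒴 → 𝒮 → ℝ) (y : 𝒴) : ℝ := ∑ x₀, ∑ xt, ∑ s, P x₀ xt y s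

/-- Marginal distribution of `(X̃, S)`. -/
def margXtS (P : 𝒳₀ → 𝒳t → 𝒴 → 𝒮 → ℝ) (xt : 𝒳t) (s : 𝒮) : ℝ := ∑ x₀, ∑ y, P x₀ xt y s

/-- Marginal distribution of `(X̃, Y)`. -/
def margXtY (P : 𝒳₀ → 𝒳t → 𝒴 → 𝒮 → ℝ) (xt : 𝒳t) (y : 𝒴) : ℝ := ∑ x₀, ∑ s, P x₀ xt y s

/-- Marginal distribution of `(X̃, Y, S)`. -/
def margXtYS (P : 𝒳₀ → 𝒳t → 𝒴 → 𝒮 → ℝ) (xt : 𝒳t) (y : 𝒴) (s : 𝒮) : ℝ := ∑ x₀, P x₀ xt y s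

/-- Marginal distribution of `(Y, S)`. -/
def margYS (P : 𝒳₀ → 𝒳t → 𝒴 → 𝒮 → ℝ) (y : 𝒴) (s : 𝒮) : ℝ := ∑ x₀, ∑ xt, P x₀ xt y s

/-- Marginal distribution of `(X, S) = (X₀, X̃, S)`. -/
def margXS (P : 𝒳₀ → 𝒳t → 𝒴 → 𝒮 → ℝ) (x₀ : 𝒳₀) (xt : 𝒳t) (s : 𝒮) : ℝ := ∑ y, P x₀ xt y s

/-!
Positivity of `P(X = x | S = s)` forces `x₀ = g s`, so `P(X = x, Y = y, S = s)` and
`P(X = x, S = s)` collapse to the `(X̃, Y, S)` and `(X̃, S)` marginals. Independence of `X̃` and `S`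
then cancels `P(S = s)`, and conditional independence turns `P(X̃ = x̃ | Y = y, S = s)` into
`P(X̃ = x̃ | Y = y)`.
-/

section Marginals

variable {P : 𝒳₀ → 𝒳t → 𝒴 → 𝒮 → ℝ} {g : 𝒮 → 𝒳₀}

omit [Fintype 𝒴] in
theorem margYS_le_margY (hP0 : ∀ x₀ xt y s, 0 ≤ P x₀ xt y s) (y : 𝒴) (s : 𝒮) :
    margYS P y s ≤ margY P y :=
  sum_le_sum fun x₀ _ => sum_le_sum fun xt _ =>
    single_le_sum (fun s' _ => hP0 x₀ xt y s') (mem_univ s)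

omit [Fintype 𝒳₀] [Fintype 𝒳t] [Fintype 𝒮] in
theorem margXS_eq_zero_of_ne (hdet : ∀ x₀ xt y s, x₀ ≠ g s → P x₀ xt y s = 0)
    {x₀ : 𝒳₀} {s : 𝒮} (h : x₀ ≠ g s) (xt : 𝒳t) : margXS P x₀ xt s = 0 :=
  sum_eq_zero fun y _ => hdet x₀ xt y s h

omit [Fintype 𝒳t] [Fintype 𝒴] [Fintype 𝒮] in
theorem margXtYS_eq_apply (hdet : ∀ x₀ xt y s, x₀ ≠ g s → P x₀ xt y s = 0)
    (xt : 𝒳t) (y : 𝒴) (s : 𝒮) : margXtYS P xt y s = P (g s) xt y s :=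
  sum_eq_single_of_mem (g s) (mem_univ _) fun x₀ _ h => hdet x₀ xt y s h

omit [Fintype 𝒳t] [Fintype 𝒮] in
theorem margXtS_eq_margXS (hdet : ∀ x₀ xt y s, x₀ ≠ g s → P x₀ xt y s = 0)
    (xt : 𝒳t) (s : 𝒮) : margXtS P xt s = margXS P (g s) xt s :=
  sum_eq_single_of_mem (g s) (mem_univ _) fun _ _ h => margXS_eq_zero_of_ne hdet h xt

end Marginals

theorem condRatio_indep_of_sensitive_general
    (P : 𝒳₀ → 𝒳t → 𝒴 → 𝒮 → ℝ)
    (hP0 : ∀ x₀ xt y s, 0 ≤ P x₀ xt y s)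
    (g : 𝒮 → 𝒳₀)
    (hdet : ∀ x₀ xt y s, x₀ ≠ g s → P x₀ xt y s = 0)
    (hindep : ∀ xt s, margXtS P xt s = margXt P xt * margS P s)
    (hcondindep : ∀ xt y s, margXtYS P xt y s * margY P y = margXtY P xt y * margYS P y s) :
    ∀ x₀ xt y s, 0 < margYS P y s → 0 < margXS P x₀ xt s / margS P s →
      (P x₀ xt y s / margYS P y s) / (margXS P x₀ xt s / margS P s)
        = (margXtY P xt y / margY P y) / margXt P xt := by
  intro x₀ xt y s hYS hXS
  have hS : margS P s ≠ 0 := by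
    rintro h
    simp [h] at hXS
  obtain rfl : x₀ = g s := by
    by_contra h
    simp [margXS_eq_zero_of_ne hdet h] at hXS
  have hY : margY P y ≠ 0 := (hYS.trans_le (margYS_le_margY hP0 y s)).ne'
  have hcond : margXtYS P xt y s / margYS P y s = margXtY P xt y / margY P y :=
    (div_eq_div_iff hYS.ne' hY).2 (hcondindep xt y s)
  rw [← margXtYS_eq_apply hdet, ← margXtS_eq_margXS hdet, hindep, mul_div_cancel_right₀ _ hS,
    hcond]

/-- **Remark 1.** Suppose `X = (X₀, X̃)` with `X₀ = g(S)` a deterministic function of `S`,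
`X̃` independent of `S`, and `X̃` conditionally independent of `S` given `Y`. Then, whenever
the conditional probabilities are defined (`P(Y=y, S=s) > 0`) and `P(X=x | S=s) > 0`, the
ratio `P(X=x | Y=y, S=s) / P(X=x | S=s)` equals `P(X̃=x̃ | Y=y) / P(X̃=x̃)`, a function of
`(x, y)` alone. -/
theorem condRatio_indep_of_sensitive
    (P : 𝒳₀ → 𝒳t → 𝒴 → 𝒮 → ℝ)
    (hP0 : ∀ x₀ xt y s, 0 ≤ P x₀ xt y s)
    (hP1 : ∑ x₀, ∑ xt, ∑ y, ∑ s, P x₀ xt y s = 1)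
    (g : 𝒮 → 𝒳₀)
    (hdet : ∀ x₀ xt y s, x₀ ≠ g s → P x₀ xt y s = 0)
    (hindep : ∀ xt s, margXtS P xt s = margXt P xt * margS P s)
    (hcondindep : ∀ xt y s, margXtYS P xt y s * margY P y = margXtY P xt y * margYS P y s) :
    ∀ x₀ xt y s, 0 < margYS P y s → 0 < margXS P x₀ xt s / margS P s →
      (P x₀ xt y s / margYS P y s) / (margXS P x₀ xt s / margS P s)
        = (margXtY P xt y / margY P y) / margXt P xt :=
  condRatio_indep_of_sensitive_general P hP0 g hdet hindep hcondindep
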